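/- arXiv:1506.01644 — 7 statements merged into one kernel-verified Lean document; each statement's English description precedes it below -/
import Mathlib

section
/- Let δ ∈ (0,1), θ' > 0, and p ∈ (0,1). Then the function u ↦ [(1 − pθ'/(u+θ'))^{−1} − 1]·u^{δ−1} is integrable on (0,∞) and ∫_0^∞ [(1 − pθ'/(u+θ'))^{−1} − 1]·u^{δ−1} du = θ'^δ · Γ(δ)·Γ(1−δ) · p·(1−p)^{δ−1}. (This is the analytic core of the formula M_{−1}(θ) = exp(C θ^δ p (1−p)^{δ−1}) for the mean local delay in a Poisson bipolar network with ALOHA, which is finite for every p < 1.) -/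
/-!
Because `(1 - pθ'/(u + θ'))⁻¹ - 1 = pθ'/(u + a)` with `a = (1 - p)θ'`, the integral is `pθ'` times
`∫₀^∞ u^(δ-1)/(u + a) du`. The substitution `u = a t/(1 - t)` turns the latter into
`a^(δ-1) B(δ, 1 - δ) = a^(δ-1) Γ(δ) Γ(1 - δ)`, and `pθ' a^(δ-1) = θ'^δ p (1 - p)^(δ-1)`.
-/

open Real MeasureTheory Set

section Beta

lemma Complex.ofReal_rpow_mul_one_sub_rpow {x : ℝ} (hx : x ∈ Icc (0:ℝ) 1) (α β : ℝ) :
    ((x ^ (α - 1) * (1 - x) ^ (β - 1) : ℝ) : ℂ) =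
      (x : ℂ) ^ ((α : ℂ) - 1) * (1 - (x : ℂ)) ^ ((β : ℂ) - 1) := by
  push_cast [Complex.ofReal_cpow hx.1, Complex.ofReal_cpow (sub_nonneg.2 hx.2)]
  rfl

variable {α β : ℝ}

lemma integrableOn_rpow_mul_one_sub_rpow (hα : 0 < α) (hβ : 0 < β) :
    IntegrableOn (fun x : ℝ => x ^ (α - 1) * (1 - x) ^ (β - 1)) (Ioo 0 1) := by
  have h := Complex.betaIntegral_convergent (u := α) (v := β) (by simpa) (by simpa)
  rw [intervalIntegrable_iff_integrableOn_Ioc_of_le zero_le_one] at h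
  have h' : IntegrableOn (fun x : ℝ => x ^ (α - 1) * (1 - x) ^ (β - 1)) (Ioc 0 1) := by
    simpa [IntegrableOn] using (h.congr_fun (fun x hx =>
      (Complex.ofReal_rpow_mul_one_sub_rpow (Ioc_subset_Icc_self hx) α β).symm)
      measurableSet_Ioc).re
  exact h'.mono_set Ioo_subset_Ioc_self

lemma integral_rpow_mul_one_sub_rpow (hα : 0 < α) (hβ : 0 < β) :
    ∫ x in Ioo (0:ℝ) 1, x ^ (α - 1) * (1 - x) ^ (β - 1) =
      Gamma α * Gamma β / Gamma (α + β) := by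
  have h := Complex.betaIntegral_eq_Gamma_mul_div α β (by simpa) (by simpa)
  rw [Complex.betaIntegral, intervalIntegral.integral_of_le zero_le_one,
    ← setIntegral_congr_fun measurableSet_Ioc
      (fun x hx => Complex.ofReal_rpow_mul_one_sub_rpow (Ioc_subset_Icc_self hx) α β),
    integral_complex_ofReal, ← Complex.ofReal_add] at h
  simp only [Complex.Gamma_ofReal] at h
  rw [← integral_Ioc_eq_integral_Ioo]
  exact_mod_cast h

end Beta

section Substitution

variable {E : Type*} [NormedAddCommGroup E] [NormedSpace ℝ E] {a : ℝ}

lemma image_mul_div_one_sub_Ioo (ha : 0 < a) :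
    (fun t => a * t / (1 - t)) '' Ioo 0 1 = Ioi 0 := by
  ext u
  constructor
  · rintro ⟨t, ⟨ht0, ht1⟩, rfl⟩
    exact div_pos (mul_pos ha ht0) (sub_pos.2 ht1)
  · intro (hu : 0 < u)
    have hau : 0 < a + u := by linarith
    refine ⟨u / (a + u), ⟨by positivity, (div_lt_one hau).2 (by linarith)⟩, ?_⟩
    have : 1 - u / (a + u) = a / (a + u) := by field_simp; ring
    simp only [this]
    field_simp

lemma strictMonoOn_mul_div_one_sub (ha : 0 < a) :
    StrictMonoOn (fun t => a * t / (1 - t)) (Iio 1) := by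
  intro s (hs : s < 1) t (ht : t < 1) hst
  rw [div_lt_div_iff₀ (sub_pos.2 hs) (sub_pos.2 ht)]
  nlinarith

lemma hasDerivAt_mul_div_one_sub {t : ℝ} (ht : t ≠ 1) :
    HasDerivAt (fun t => a * t / (1 - t)) (a / (1 - t) ^ 2) t := by
  have h1t : 1 - t ≠ 0 := sub_ne_zero.2 ht.symm
  refine (((hasDerivAt_id t).const_mul a).div ((hasDerivAt_id t).const_sub 1) h1t).congr_deriv ?_
  simp only [id]
  field_simp
  ring

lemma integrableOn_Ioi_iff_integrableOn_Ioo_mul_div_one_sub (ha : 0 < a) (g : ℝ → E) :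
    IntegrableOn g (Ioi 0) ↔
      IntegrableOn (fun t => (a / (1 - t) ^ 2) • g (a * t / (1 - t))) (Ioo 0 1) := by
  rw [← image_mul_div_one_sub_Ioo ha]
  exact integrableOn_image_iff_integrableOn_deriv_smul_of_monotoneOn measurableSet_Ioo
    (fun t ht => (hasDerivAt_mul_div_one_sub ht.2.ne).hasDerivWithinAt)
    ((strictMonoOn_mul_div_one_sub ha).monotoneOn.mono fun t ht => ht.2) g

lemma integral_Ioi_eq_integral_Ioo_mul_div_one_sub (ha : 0 < a) (g : ℝ → E) :
    ∫ u in Ioi 0, g u = ∫ t in Ioo 0 1, (a / (1 - t) ^ 2) • g (a * t / (1 - t)) := by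
  rw [← image_mul_div_one_sub_Ioo ha]
  exact integral_image_eq_integral_deriv_smul_of_monotoneOn measurableSet_Ioo
    (fun t ht => (hasDerivAt_mul_div_one_sub ht.2.ne).hasDerivWithinAt)
    ((strictMonoOn_mul_div_one_sub ha).monotoneOn.mono fun t ht => ht.2) g

end Substitution

section RpowDivAdd

variable {s a : ℝ}

lemma mul_rpow_div_add_mul_div_one_sub (ha : 0 < a) {t : ℝ} (ht : t ∈ Ioo (0:ℝ) 1) :
    a / (1 - t) ^ 2 * ((a * t / (1 - t)) ^ (s - 1) / (a * t / (1 - t) + a)) =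
      a ^ (s - 1) * (t ^ (s - 1) * (1 - t) ^ ((1 - s) - 1)) := by
  obtain ⟨ht0, ht1⟩ := ht
  have h1t : 0 < 1 - t := sub_pos.2 ht1
  rw [div_rpow (by positivity) h1t.le, mul_rpow ha.le ht0.le, rpow_sub_one ha.ne',
    rpow_sub_one ht0.ne', rpow_sub_one h1t.ne', rpow_sub_one h1t.ne', rpow_sub h1t, rpow_one]
  have : 0 < (1 - t) ^ s := by positivity
  have : 0 < t ^ s := by positivity
  have : 0 < a ^ s := by positivity
  field_simp
  ring

lemma integrableOn_rpow_div_add (hs0 : 0 < s) (hs1 : s < 1) (ha : 0 < a) :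
    IntegrableOn (fun u : ℝ => u ^ (s - 1) / (u + a)) (Ioi 0) := by
  rw [integrableOn_Ioi_iff_integrableOn_Ioo_mul_div_one_sub ha]
  simp only [smul_eq_mul]
  exact IntegrableOn.congr_fun
    ((integrableOn_rpow_mul_one_sub_rpow hs0 (sub_pos.2 hs1)).const_mul (a ^ (s - 1)))
    (fun t ht => (mul_rpow_div_add_mul_div_one_sub ha ht).symm) measurableSet_Ioo

lemma integral_rpow_div_add (hs0 : 0 < s) (hs1 : s < 1) (ha : 0 < a) :
    ∫ u in Ioi 0, u ^ (s - 1) / (u + a) = a ^ (s - 1) * (Gamma s * Gamma (1 - s)) := by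
  simp only [integral_Ioi_eq_integral_Ioo_mul_div_one_sub ha, smul_eq_mul]
  rw [setIntegral_congr_fun measurableSet_Ioo fun t ht => mul_rpow_div_add_mul_div_one_sub ha ht,
    integral_const_mul, integral_rpow_mul_one_sub_rpow hs0 (sub_pos.2 hs1), add_sub_cancel,
    Gamma_one, div_one]

end RpowDivAdd

lemma inv_one_sub_div_add_sub_one {p θ u : ℝ} (h₁ : u + θ ≠ 0) (h₂ : u + (1 - p) * θ ≠ 0) :
    (1 - p * θ / (u + θ))⁻¹ - 1 = p * θ / (u + (1 - p) * θ) := by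
  have : 1 - p * θ / (u + θ) = (u + (1 - p) * θ) / (u + θ) := by
    field_simp
    ring
  rw [this, inv_div, div_sub_one h₂]
  ring

/-- For `δ ∈ (0,1)`, `θ' > 0`, `p ∈ (0,1)`: the function
`u ↦ ((1 - pθ'/(u+θ'))⁻¹ - 1) u^(δ-1)` is integrable on `(0,∞)` and
`∫_0^∞ ((1 - pθ'/(u+θ'))⁻¹ - 1) u^(δ-1) du = θ'^δ Γ(δ)Γ(1-δ) p (1-p)^(δ-1)`
(the analytic core of the mean local delay `M_{-1}` in a Poisson bipolar network). -/
theorem bipolar_mean_local_delay_integral (δ θ' p : ℝ) (hδ : δ ∈ Set.Ioo (0:ℝ) 1)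
    (hθ : 0 < θ') (hp : p ∈ Set.Ioo (0:ℝ) 1) :
    IntegrableOn
      (fun u : ℝ => ((1 - p * θ' / (u + θ'))⁻¹ - 1) * u ^ (δ - 1)) (Set.Ioi 0) ∧
    (∫ u in Set.Ioi (0:ℝ), ((1 - p * θ' / (u + θ'))⁻¹ - 1) * u ^ (δ - 1)) =
      θ' ^ δ * Real.Gamma δ * Real.Gamma (1 - δ) * (p * (1 - p) ^ (δ - 1)) := by
  have h1p : 0 < 1 - p := sub_pos.2 hp.2
  have ha : 0 < (1 - p) * θ' := mul_pos h1p hθ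
  have hkernel : ∀ u ∈ Ioi (0:ℝ), ((1 - p * θ' / (u + θ'))⁻¹ - 1) * u ^ (δ - 1) =
      p * θ' * (u ^ (δ - 1) / (u + (1 - p) * θ')) := fun u (hu : 0 < u) => by
    rw [inv_one_sub_div_add_sub_one (by positivity) (by positivity)]
    ring
  refine ⟨IntegrableOn.congr_fun ((integrableOn_rpow_div_add hδ.1 hδ.2 ha).const_mul (p * θ'))
    (fun u hu => (hkernel u hu).symm) measurableSet_Ioi, ?_⟩
  rw [setIntegral_congr_fun measurableSet_Ioi hkernel, integral_const_mul,
    integral_rpow_div_add hδ.1 hδ.2 ha, mul_rpow h1p.le hθ.le, rpow_sub_one hθ.ne']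
  field_simp
end

section
/- For every real b ≥ 1 and every δ ∈ (0,1), Γ(b+δ)/Γ(b) ≥ b^δ · Γ(1+δ). Consequently, for any C > 0 and θ > 0, the moment M_b = exp(−Cθ^δ · Γ(b+δ)/(Γ(1+δ)Γ(b))) of the conditional success probability in a Poisson bipolar network with p = 1 satisfies M_b ≤ M₁^{b^δ}, where M₁ = exp(−Cθ^δ); equivalently M_b(θ) ≤ M₁(bθ) for b ≥ 1. -/
/-!
Since `Γ(b) Γ(δ) = Γ(b + δ) B(b, δ)` and `δ Γ(δ) = Γ(1 + δ)`, the Gamma-ratio bound is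
equivalent to `B(b, δ) ≤ 1 / (δ b ^ δ)`. Bernoulli's inequality `1 - x ^ b ≤ b (1 - x)` on `[0, 1]`
gives `(1 - x) ^ (δ - 1) ≤ b ^ (1 - δ) (1 - x ^ b) ^ (δ - 1)`, and after multiplying by
`x ^ (b - 1)` the right side has the primitive `-(1 - x ^ b) ^ δ / (δ b ^ δ)`, whose increment over
`[0, 1]` is exactly `1 / (δ b ^ δ)`. The moment bounds then follow because `t ↦ exp (-C θ ^ δ t)`
is decreasing.
-/

open Real MeasureTheory Set

theorem Real.Gamma_mul_Gamma_eq_Gamma_add_mul_integral {s t : ℝ} (hs : 0 < s) (ht : 0 < t) :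
    Gamma s * Gamma t = Gamma (s + t) * ∫ x in (0:ℝ)..1, x ^ (s - 1) * (1 - x) ^ (t - 1) := by
  have h := Complex.Gamma_mul_Gamma_eq_betaIntegral (s := s) (t := t)
    (by simpa using hs) (by simpa using ht)
  have hI : Complex.betaIntegral s t
      = ((∫ x in (0:ℝ)..1, x ^ (s - 1) * (1 - x) ^ (t - 1) : ℝ) : ℂ) := by
    rw [Complex.betaIntegral, ← intervalIntegral.integral_ofReal]
    refine intervalIntegral.integral_congr_ae (Filter.Eventually.of_forall fun x hx => ?_)
    rw [uIoc_of_le zero_le_one, mem_Ioc] at hx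
    rw [Complex.ofReal_mul, Complex.ofReal_cpow hx.1.le,
      Complex.ofReal_cpow (by linarith [hx.2] : (0:ℝ) ≤ 1 - x)]
    push_cast
    ring
  rw [hI, Complex.Gamma_ofReal, Complex.Gamma_ofReal, ← Complex.ofReal_add,
    Complex.Gamma_ofReal] at h
  exact_mod_cast h

theorem one_sub_rpow_le_mul_one_sub {x p : ℝ} (hx : 0 ≤ x) (hp : 1 ≤ p) :
    1 - x ^ p ≤ p * (1 - x) := by
  have h := one_add_mul_self_le_rpow_one_add (s := x - 1) (by linarith) hp
  rw [add_sub_cancel] at h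
  linarith

theorem one_sub_rpow_le_rpow_neg_mul_one_sub_rpow {x p q : ℝ} (hx0 : 0 ≤ x) (hx1 : x < 1)
    (hp : 1 ≤ p) (hq : q ≤ 0) :
    (1 - x) ^ q ≤ p ^ (-q) * (1 - x ^ p) ^ q := by
  have hp0 : 0 < p := by linarith
  have hxp : 0 < 1 - x ^ p := by linarith [rpow_lt_one hx0 hx1 hp0]
  have h := rpow_le_rpow_of_nonpos hxp (one_sub_rpow_le_mul_one_sub hx0 hp) hq
  rw [mul_rpow hp0.le (by linarith)] at h
  calc (1 - x) ^ q = p ^ (-q) * (p ^ q * (1 - x) ^ q) := by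
        rw [← mul_assoc, ← rpow_add hp0, neg_add_cancel, rpow_zero, one_mul]
    _ ≤ p ^ (-q) * (1 - x ^ p) ^ q := by gcongr

theorem intervalIntegrable_rpow_mul_one_sub_rpow {a b : ℝ} (ha : 0 ≤ a) (hb : 0 < b) :
    IntervalIntegrable (fun x : ℝ => x ^ a * (1 - x) ^ (b - 1)) volume 0 1 := by
  have h : IntervalIntegrable (fun x : ℝ => (1 - x) ^ (b - 1)) volume 0 1 := by
    simpa using ((intervalIntegral.intervalIntegrable_rpow' (r := b - 1) (by linarith)).symm
      (a := 0) (b := 1)).comp_sub_left 1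
  exact h.continuousOn_mul (continuous_rpow_const ha).continuousOn

theorem integral_rpow_mul_one_sub_rpow_le {b d : ℝ} (hb : 1 ≤ b) (hd0 : 0 < d) (hd1 : d ≤ 1) :
    ∫ x in (0:ℝ)..1, x ^ (b - 1) * (1 - x) ^ (d - 1) ≤ 1 / (d * b ^ d) := by
  have hb0 : 0 < b := by linarith
  set G : ℝ → ℝ := fun x => -(1 - x ^ b) ^ d / (d * b ^ d)
  have hG : ∀ x ∈ Ioo (0:ℝ) 1,
      HasDerivAt G (x ^ (b - 1) * (b ^ (1 - d) * (1 - x ^ b) ^ (d - 1))) x := by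
    intro x hx
    have hxb : 1 - x ^ b ≠ 0 := by linarith [rpow_lt_one hx.1.le hx.2 hb0]
    refine (((hasDerivAt_rpow_const (p := b) (Or.inl hx.1.ne')).const_sub 1).rpow_const
      (p := d) (Or.inl hxb)).neg.div_const (d * b ^ d) |>.congr_deriv ?_
    rw [rpow_sub hb0, rpow_one]
    field_simp
  have hG_cont : ContinuousOn G (Icc 0 1) :=
    (((continuous_const.sub (continuous_rpow_const hb0.le)).rpow_const
      fun _ => Or.inr hd0.le).neg.div_const _).continuousOn
  have hle : ∀ x ∈ Ioo (0:ℝ) 1, x ^ (b - 1) * (1 - x) ^ (d - 1) ≤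
      x ^ (b - 1) * (b ^ (1 - d) * (1 - x ^ b) ^ (d - 1)) := by
    intro x hx
    have h := one_sub_rpow_le_rpow_neg_mul_one_sub_rpow hx.1.le hx.2 hb (q := d - 1)
      (by linarith)
    rw [neg_sub] at h
    exact mul_le_mul_of_nonneg_left h (rpow_nonneg hx.1.le _)
  have h := intervalIntegral.integral_le_sub_of_hasDeriv_right_of_le zero_le_one hG_cont
    (fun x hx => (hG x hx).hasDerivWithinAt)
    ((intervalIntegrable_iff_integrableOn_Icc_of_le zero_le_one).1
      (intervalIntegrable_rpow_mul_one_sub_rpow (a := b - 1) (by linarith) hd0)) hle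
  simpa [G, zero_rpow hb0.ne', zero_rpow hd0.ne', neg_div] using h

theorem Real.rpow_mul_Gamma_one_add_le_Gamma_add_div_Gamma {b d : ℝ} (hb : 1 ≤ b)
    (hd0 : 0 < d) (hd1 : d ≤ 1) :
    b ^ d * Gamma (1 + d) ≤ Gamma (b + d) / Gamma b := by
  have hb0 : 0 < b := by linarith
  set B := ∫ x in (0:ℝ)..1, x ^ (b - 1) * (1 - x) ^ (d - 1)
  have hbeta := Gamma_mul_Gamma_eq_Gamma_add_mul_integral hb0 hd0
  have hB : 0 < B := by
    have := mul_pos (Gamma_pos_of_pos hb0) (Gamma_pos_of_pos hd0)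
    rw [hbeta] at this
    exact pos_of_mul_pos_right this (Gamma_pos_of_pos (by linarith)).le
  calc b ^ d * Gamma (1 + d) = Gamma d / (1 / (d * b ^ d)) := by
        rw [add_comm, Gamma_add_one hd0.ne']
        field_simp
    _ ≤ Gamma d / B := div_le_div_of_nonneg_left (Gamma_pos_of_pos hd0).le hB
        (integral_rpow_mul_one_sub_rpow_le hb hd0 hd1)
    _ = Gamma (b + d) / Gamma b := by
        rw [div_eq_div_iff hB.ne' (Gamma_pos_of_pos hb0).ne', mul_comm, hbeta]

/-- For `b ≥ 1` and `δ ∈ (0,1)`: `Γ(b+δ)/Γ(b) ≥ b^δ Γ(1+δ)`. Consequently, for any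
`C > 0` and `θ > 0`, the moment `M_b = exp(-Cθ^δ Γ(b+δ)/(Γ(1+δ)Γ(b)))` satisfies
`M_b ≤ M₁^(b^δ)` with `M₁ = exp(-Cθ^δ)`, equivalently `M_b(θ) ≤ M₁(bθ)`. -/
theorem bipolar_moment_upper_bound (b δ : ℝ) (hb : 1 ≤ b) (hδ : δ ∈ Set.Ioo (0:ℝ) 1) :
    Real.Gamma (b + δ) / Real.Gamma b ≥ b ^ δ * Real.Gamma (1 + δ) ∧
    ∀ C θ : ℝ, 0 < C → 0 < θ →
      Real.exp (-(C * θ ^ δ * (Real.Gamma (b + δ) / (Real.Gamma (1 + δ) * Real.Gamma b)))) ≤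
        Real.exp (-(C * θ ^ δ)) ^ (b ^ δ) ∧
      Real.exp (-(C * θ ^ δ * (Real.Gamma (b + δ) / (Real.Gamma (1 + δ) * Real.Gamma b)))) ≤
        Real.exp (-(C * (b * θ) ^ δ)) := by
  obtain ⟨hδ0, hδ1⟩ := hδ
  have hratio := rpow_mul_Gamma_one_add_le_Gamma_add_div_Gamma hb hδ0 hδ1.le
  refine ⟨hratio, fun C θ hC hθ => ?_⟩
  have hexponent : b ^ δ ≤ Gamma (b + δ) / (Gamma (1 + δ) * Gamma b) := by
    rw [mul_comm, ← div_div, le_div_iff₀ (Gamma_pos_of_pos (by linarith))]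
    exact hratio
  have hmoment : exp (-(C * θ ^ δ * (Gamma (b + δ) / (Gamma (1 + δ) * Gamma b)))) ≤
      exp (-(C * θ ^ δ * b ^ δ)) :=
    exp_le_exp.2 (neg_le_neg (mul_le_mul_of_nonneg_left hexponent (by positivity)))
  constructor
  · rwa [← exp_mul, neg_mul]
  · rwa [mul_rpow (by linarith) hθ.le, mul_comm (b ^ δ), ← mul_assoc]
end

section
/- For every real b with 0 < b < 1 and every δ ∈ (0,1), Γ(b+δ)/Γ(b) < b^δ · Γ(1+δ). Consequently, for any C > 0 and θ > 0, the moment M_b = exp(−Cθ^δ · Γ(b+δ)/(Γ(1+δ)Γ(b))) of the conditional success probability in a Poisson bipolar network with p = 1 satisfies M_b > M₁^{b^δ}, where M₁ = exp(−Cθ^δ). -/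
/-!
Writing `B(b, δ) = ∫₀¹ t^(b-1) (1-t)^(δ-1) dt = Γ(b)Γ(δ)/Γ(b+δ)`, the inequality
`Γ(b+δ)/Γ(b) < b^δ Γ(1+δ)` says `1/δ < b^δ B(b, δ)`. The substitution `u = t^b` gives
`1/δ = ∫₀¹ (1-u)^(δ-1) du = ∫₀¹ b t^(b-1) (1-t^b)^(δ-1) dt`, and Bernoulli's inequality
`1 - t^b > b (1-t)` for `0 < b < 1`, raised to the negative power `δ - 1`, bounds this integrand
strictly by `b^δ t^(b-1) (1-t)^(δ-1)`. The moment bound is then monotonicity of `exp`.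
-/

open Real MeasureTheory Set

theorem setIntegral_lt_setIntegral_of_forall_lt {X : Type*} [MeasurableSpace X] {μ : Measure X}
    {s : Set X} {f g : X → ℝ} (hs : MeasurableSet s) (hμ : μ s ≠ 0)
    (hf : IntegrableOn f s μ) (hg : IntegrableOn g s μ) (hlt : ∀ x ∈ s, f x < g x) :
    ∫ x in s, f x ∂μ < ∫ x in s, g x ∂μ := by
  rw [← sub_pos, ← integral_sub hg hf, setIntegral_pos_iff_support_of_nonneg_ae
    ((ae_restrict_iff' hs).2 (.of_forall fun x hx => sub_nonneg.2 (hlt x hx).le)) (hg.sub hf)]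
  have hsupp : (Function.support fun x => g x - f x) ∩ s = s :=
    inter_eq_right.2 fun x hx => sub_ne_zero.2 (hlt x hx).ne'
  rwa [hsupp, pos_iff_ne_zero]

theorem image_rpow_Ioo_zero_one {p : ℝ} (hp : 0 < p) :
    (fun t : ℝ => t ^ p) '' Ioo 0 1 = Ioo 0 1 := by
  refine Subset.antisymm ?_ fun y hy => ⟨y ^ p⁻¹, ?_, ?_⟩
  · rintro _ ⟨x, hx, rfl⟩
    exact ⟨rpow_pos_of_pos hx.1 p, rpow_lt_one hx.1.le hx.2 hp⟩
  · exact ⟨rpow_pos_of_pos hy.1 _, rpow_lt_one hy.1.le hy.2 (inv_pos.2 hp)⟩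
  · exact rpow_inv_rpow hy.1.le hp.ne'

theorem hasDerivWithinAt_rpow_Ioo_zero_one (p : ℝ) : ∀ t ∈ Ioo (0:ℝ) 1,
    HasDerivWithinAt (fun t : ℝ => t ^ p) (p * t ^ (p - 1)) (Ioo 0 1) t :=
  fun _ ht => (hasDerivAt_rpow_const (Or.inl ht.1.ne')).hasDerivWithinAt

theorem injOn_rpow_Ioo_zero_one {p : ℝ} (hp : 0 < p) : InjOn (fun t : ℝ => t ^ p) (Ioo 0 1) :=
  ((strictMonoOn_rpow_Ici_of_exponent_pos hp).mono fun _ ht => ht.1.le).injOn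

theorem integral_Ioo_zero_one_comp_rpow {p : ℝ} (hp : 0 < p) (g : ℝ → ℝ) :
    ∫ t in Ioo (0:ℝ) 1, p * t ^ (p - 1) * g (t ^ p) = ∫ u in Ioo (0:ℝ) 1, g u := by
  have h := integral_image_eq_integral_abs_deriv_smul measurableSet_Ioo
    (hasDerivWithinAt_rpow_Ioo_zero_one p) (injOn_rpow_Ioo_zero_one hp) g
  rw [image_rpow_Ioo_zero_one hp] at h
  rw [h]
  refine setIntegral_congr_fun measurableSet_Ioo fun t ht => ?_
  rw [smul_eq_mul, abs_of_pos (by have := ht.1; positivity)]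

theorem integrableOn_Ioo_zero_one_comp_rpow_iff {p : ℝ} (hp : 0 < p) (g : ℝ → ℝ) :
    IntegrableOn (fun t => p * t ^ (p - 1) * g (t ^ p)) (Ioo 0 1) ↔ IntegrableOn g (Ioo 0 1) := by
  have h := integrableOn_image_iff_integrableOn_abs_deriv_smul measurableSet_Ioo
    (hasDerivWithinAt_rpow_Ioo_zero_one p) (injOn_rpow_Ioo_zero_one hp) g
  rw [image_rpow_Ioo_zero_one hp] at h
  rw [h]
  refine integrableOn_congr_fun (fun t ht => ?_) measurableSet_Ioo
  rw [smul_eq_mul, abs_of_pos (by have := ht.1; positivity)]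

theorem integrableOn_Ioo_zero_one_one_sub_rpow {δ : ℝ} (hδ : 0 < δ) :
    IntegrableOn (fun u : ℝ => (1 - u) ^ (δ - 1)) (Ioo 0 1) := by
  have h := (intervalIntegral.intervalIntegrable_rpow' (a := 0) (b := 1) (r := δ - 1)
    (by linarith)).comp_sub_left 1
  rw [sub_self, sub_zero] at h
  exact (intervalIntegrable_iff_integrableOn_Ioo_of_le zero_le_one).1 h.symm

theorem integral_Ioo_zero_one_one_sub_rpow {δ : ℝ} (hδ : 0 < δ) :
    ∫ u in Ioo (0:ℝ) 1, (1 - u) ^ (δ - 1) = 1 / δ := by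
  rw [← integral_Ioc_eq_integral_Ioo, ← intervalIntegral.integral_of_le zero_le_one,
    intervalIntegral.integral_comp_sub_left (fun u => u ^ (δ - 1)), sub_self, sub_zero,
    integral_rpow (Or.inl (by linarith)), sub_add_cancel, zero_rpow hδ.ne', one_rpow]
  ring

noncomputable def Real.betaIntegral (u v : ℝ) : ℝ :=
  ∫ x in Ioo (0:ℝ) 1, x ^ (u - 1) * (1 - x) ^ (v - 1)

theorem ofReal_betaIntegrand {u v x : ℝ} (hx : x ∈ Icc (0:ℝ) 1) :
    ((x ^ (u - 1) * (1 - x) ^ (v - 1) : ℝ) : ℂ) =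
      (x : ℂ) ^ ((u : ℂ) - 1) * (1 - (x : ℂ)) ^ ((v : ℂ) - 1) := by
  rw [Complex.ofReal_mul, Complex.ofReal_cpow hx.1, Complex.ofReal_cpow (sub_nonneg.2 hx.2)]
  push_cast
  rfl

theorem integrableOn_Ioo_betaIntegrand {u v : ℝ} (hu : 0 < u) (hv : 0 < v) :
    IntegrableOn (fun x : ℝ => x ^ (u - 1) * (1 - x) ^ (v - 1)) (Ioo 0 1) := by
  have h := (Complex.betaIntegral_convergent (u := u) (v := v) (by simpa) (by simpa)).1.re
  refine (IntegrableOn.congr_fun h (fun x hx => ?_) measurableSet_Ioc).mono_set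
    Ioo_subset_Ioc_self
  rw [← ofReal_betaIntegrand (Ioc_subset_Icc_self hx), RCLike.re_to_complex, Complex.ofReal_re]

theorem Complex.betaIntegral_ofReal (u v : ℝ) :
    Complex.betaIntegral u v = Real.betaIntegral u v := by
  rw [Complex.betaIntegral, Real.betaIntegral, intervalIntegral.integral_of_le zero_le_one,
    ← integral_Ioc_eq_integral_Ioo, ← integral_complex_ofReal]
  exact setIntegral_congr_fun measurableSet_Ioc fun x hx =>
    (ofReal_betaIntegrand (Ioc_subset_Icc_self hx)).symm

theorem Real.Gamma_mul_Gamma_eq_Gamma_add_mul_betaIntegral {u v : ℝ} (hu : 0 < u) (hv : 0 < v) :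
    Gamma u * Gamma v = Gamma (u + v) * betaIntegral u v := by
  have h := Complex.Gamma_mul_Gamma_eq_betaIntegral (s := u) (t := v) (by simpa) (by simpa)
  rw [Complex.betaIntegral_ofReal, ← Complex.ofReal_add, Complex.Gamma_ofReal,
    Complex.Gamma_ofReal, Complex.Gamma_ofReal] at h
  exact_mod_cast h

theorem mul_one_sub_lt_one_sub_rpow {b t : ℝ} (hb0 : 0 < b) (hb1 : b < 1) (ht0 : 0 ≤ t)
    (ht1 : t < 1) : b * (1 - t) < 1 - t ^ b := by
  have h := rpow_one_add_lt_one_add_mul_self (s := t - 1) (by linarith) (sub_ne_zero.2 ht1.ne)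
    hb0 hb1
  rw [add_sub_cancel] at h
  linarith

theorem mul_rpow_mul_one_sub_rpow_lt {b δ t : ℝ} (hb0 : 0 < b) (hb1 : b < 1) (hδ1 : δ < 1)
    (ht : t ∈ Ioo (0:ℝ) 1) :
    b * t ^ (b - 1) * (1 - t ^ b) ^ (δ - 1) < b ^ δ * (t ^ (b - 1) * (1 - t) ^ (δ - 1)) := by
  have hbern := mul_one_sub_lt_one_sub_rpow hb0 hb1 ht.1.le ht.2
  have hpow : ((1 - t ^ b) / b) ^ (δ - 1) < (1 - t) ^ (δ - 1) :=
    rpow_lt_rpow_of_neg (by linarith [ht.2]) ((lt_div_iff₀ hb0).2 (by linarith)) (by linarith)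
  have hsplit : b * (1 - t ^ b) ^ (δ - 1) = b ^ δ * ((1 - t ^ b) / b) ^ (δ - 1) := by
    rw [div_rpow (by nlinarith [ht.2]) hb0.le, rpow_sub_one hb0.ne']
    field_simp
  calc b * t ^ (b - 1) * (1 - t ^ b) ^ (δ - 1)
      = b ^ δ * (t ^ (b - 1) * ((1 - t ^ b) / b) ^ (δ - 1)) := by
        rw [mul_right_comm, hsplit]; ring
    _ < b ^ δ * (t ^ (b - 1) * (1 - t) ^ (δ - 1)) := by
      gcongr
      exact rpow_pos_of_pos ht.1 _

theorem Real.one_div_lt_rpow_mul_betaIntegral {b δ : ℝ} (hb0 : 0 < b) (hb1 : b < 1)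
    (hδ0 : 0 < δ) (hδ1 : δ < 1) : 1 / δ < b ^ δ * betaIntegral b δ := by
  have hsubst : IntegrableOn (fun t => b * t ^ (b - 1) * (1 - t ^ b) ^ (δ - 1)) (Ioo 0 1) :=
    (integrableOn_Ioo_zero_one_comp_rpow_iff hb0 _).2 (integrableOn_Ioo_zero_one_one_sub_rpow hδ0)
  calc 1 / δ = ∫ t in Ioo (0:ℝ) 1, b * t ^ (b - 1) * (1 - t ^ b) ^ (δ - 1) := by
        rw [integral_Ioo_zero_one_comp_rpow hb0 (fun u => (1 - u) ^ (δ - 1)),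
          integral_Ioo_zero_one_one_sub_rpow hδ0]
    _ < ∫ t in Ioo (0:ℝ) 1, b ^ δ * (t ^ (b - 1) * (1 - t) ^ (δ - 1)) :=
        setIntegral_lt_setIntegral_of_forall_lt measurableSet_Ioo (by simp) hsubst
          ((integrableOn_Ioo_betaIntegrand hb0 hδ0).const_mul _)
          fun t ht => mul_rpow_mul_one_sub_rpow_lt hb0 hb1 hδ1 ht
    _ = b ^ δ * betaIntegral b δ := integral_const_mul _ _

theorem Real.Gamma_add_div_Gamma_lt_rpow_mul_Gamma_one_add {b δ : ℝ} (hb0 : 0 < b) (hb1 : b < 1)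
    (hδ0 : 0 < δ) (hδ1 : δ < 1) : Gamma (b + δ) / Gamma b < b ^ δ * Gamma (1 + δ) := by
  have hbeta := Gamma_mul_Gamma_eq_Gamma_add_mul_betaIntegral hb0 hδ0
  have hlt := one_div_lt_rpow_mul_betaIntegral hb0 hb1 hδ0 hδ1
  have hpos : 0 < δ * Gamma (b + δ) := mul_pos hδ0 (Gamma_pos_of_pos (by linarith))
  rw [div_lt_iff₀ (Gamma_pos_of_pos hb0), add_comm 1 δ, Gamma_add_one hδ0.ne']
  calc Gamma (b + δ) = δ * Gamma (b + δ) * (1 / δ) := by field_simp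
    _ < δ * Gamma (b + δ) * (b ^ δ * betaIntegral b δ) :=
        mul_lt_mul_of_pos_left hlt hpos
    _ = b ^ δ * (δ * Gamma δ) * Gamma b := by linear_combination (-(δ * b ^ δ)) * hbeta

/-- For `0 < b < 1` and `δ ∈ (0,1)`: `Γ(b+δ)/Γ(b) < b^δ Γ(1+δ)`. Consequently, for any
`C > 0` and `θ > 0`, the moment `M_b = exp(-Cθ^δ Γ(b+δ)/(Γ(1+δ)Γ(b)))` satisfies
`M_b > M₁^(b^δ)` with `M₁ = exp(-Cθ^δ)`. -/
theorem bipolar_moment_lower_bound (b δ : ℝ) (hb : b ∈ Set.Ioo (0:ℝ) 1)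
    (hδ : δ ∈ Set.Ioo (0:ℝ) 1) :
    Real.Gamma (b + δ) / Real.Gamma b < b ^ δ * Real.Gamma (1 + δ) ∧
    ∀ C θ : ℝ, 0 < C → 0 < θ →
      Real.exp (-(C * θ ^ δ * (Real.Gamma (b + δ) / (Real.Gamma (1 + δ) * Real.Gamma b)))) >
        Real.exp (-(C * θ ^ δ)) ^ (b ^ δ) := by
  obtain ⟨hb0, hb1⟩ := hb
  obtain ⟨hδ0, hδ1⟩ := hδ
  have hratio := Gamma_add_div_Gamma_lt_rpow_mul_Gamma_one_add hb0 hb1 hδ0 hδ1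
  refine ⟨hratio, fun C θ hC hθ => ?_⟩
  have hexponent : Gamma (b + δ) / (Gamma (1 + δ) * Gamma b) < b ^ δ := by
    rwa [mul_comm (Gamma (1 + δ)), ← div_div, div_lt_iff₀ (Gamma_pos_of_pos (by linarith))]
  rw [gt_iff_lt, ← exp_mul, exp_lt_exp, neg_mul, neg_lt_neg_iff]
  exact mul_lt_mul_of_pos_left hexponent (by positivity)
end

section
/- Let δ ∈ (0,1) and θ > 0. Then 1 + 2∫_0^1 (1 − (1+θ r^{2/δ}))·r^{−3} dr = (1 − δ(1+θ))/(1−δ), and this quantity is positive if and only if θ < 1/δ − 1. Consequently the mean local delay of the typical user in a Poisson cellular network, M_{−1} = (1−δ)/(1−δ(1+θ)), is finite and positive exactly when θ < 1/δ − 1 (equivalently θ < α/2 − 1), exhibiting a phase transition at θ = 1/δ − 1. -/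
open Real MeasureTheory

/-- For `δ ∈ (0,1)` and `θ > 0`:
`1 + 2∫_0^1 (1 - (1+θr^{2/δ})) r^{-3} dr = (1 - δ(1+θ))/(1-δ)`, which is positive iff
`θ < 1/δ - 1`; consequently the mean local delay `M_{-1} = (1-δ)/(1-δ(1+θ))` is positive
(finite) exactly when `θ < 1/δ - 1` — the phase transition of the local delay. -/
theorem cellular_local_delay_phase_transition (δ θ : ℝ) (hδ : δ ∈ Set.Ioo (0:ℝ) 1)
    (hθ : 0 < θ) :
    1 + 2 * ∫ r in Set.Ioo (0:ℝ) 1, (1 - (1 + θ * r ^ (2 / δ))) * r ^ (-3 : ℝ) =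
      (1 - δ * (1 + θ)) / (1 - δ) ∧
    (0 < (1 - δ * (1 + θ)) / (1 - δ) ↔ θ < 1 / δ - 1) ∧
    (0 < (1 - δ) / (1 - δ * (1 + θ)) ↔ θ < 1 / δ - 1) := by
  obtain ⟨hδ0, hδ1⟩ := hδ
  have h1δ : (0:ℝ) < 1 - δ := by linarith
  have hp : (2:ℝ) < 2 / δ := by
    rw [lt_div_iff₀ hδ0]; nlinarith
  have hexp : (-1:ℝ) < 2 / δ - 3 := by linarith
  have hne : 2 / δ - 3 + 1 ≠ 0 := by linarith
  have hint : (∫ r in Set.Ioo (0:ℝ) 1, (1 - (1 + θ * r ^ (2 / δ))) * r ^ (-3 : ℝ))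
      = -θ * (1 / (2 / δ - 2)) := by
    have hcong : ∀ r ∈ Set.Ioo (0:ℝ) 1,
        (1 - (1 + θ * r ^ (2 / δ))) * r ^ (-3 : ℝ) = -θ * r ^ (2 / δ - 3) := by
      intro r hr
      have hr0 : 0 < r := hr.1
      rw [show (1 - (1 + θ * r ^ (2 / δ))) = -θ * r ^ (2 / δ) by ring, mul_assoc,
        ← Real.rpow_add hr0, show 2 / δ + -3 = 2 / δ - 3 by ring]
    rw [setIntegral_congr_fun measurableSet_Ioo hcong]
    rw [← MeasureTheory.integral_Ioc_eq_integral_Ioo,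
      ← intervalIntegral.integral_of_le (by norm_num : (0:ℝ) ≤ 1)]
    rw [intervalIntegral.integral_const_mul, integral_rpow (Or.inl hexp)]
    rw [Real.one_rpow, Real.zero_rpow hne]
    ring_nf
  constructor
  · rw [hint]
    rw [show 2 / δ - 2 = 2 * (1 - δ) / δ by field_simp]
    field_simp
    ring
  have key : 0 < 1 - δ * (1 + θ) ↔ θ < 1 / δ - 1 := by
    rw [show 1 / δ - 1 = (1 - δ) / δ by field_simp, lt_div_iff₀ hδ0]
    constructor <;> intro h <;> nlinarith
  constructor
  · rw [div_pos_iff]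
    constructor
    · rintro (⟨h, _⟩ | ⟨_, h⟩)
      · exact key.mp h
      · linarith
    · intro h
      exact Or.inl ⟨key.mpr h, h1δ⟩
  · rw [div_pos_iff]
    constructor
    · rintro (⟨_, h⟩ | ⟨h, _⟩)
      · exact key.mp h
      · linarith
    · intro h
      exact Or.inl ⟨h1δ, key.mpr h⟩
end

section
/- Let δ ∈ (0,1), θ > 0, and p ∈ (0,1]. Then 2∫_0^1 [(1+θ r^{2/δ})/(1+(1−p)θ r^{2/δ}) − 1]·r^{−3} dr = pθδ·∫_0^1 t^{−δ}/(1+(1−p)θt) dt. Moreover, if θ < 1/δ − 1 then pθδ·∫_0^1 t^{−δ}/(1+(1−p)θt) dt < 1 for every p ∈ (0,1], so the mean local delay M_{−1} = (1 − pθδ∫_0^1 t^{−δ}/(1+(1−p)θt) dt)^{−1} of a Poisson cellular network with base-station activity probability p is finite; i.e., the critical activity probability p_c(θ) equals 1 whenever θ < 1/δ − 1. -/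
open Real MeasureTheory Set

/-- For `δ ∈ (0,1)`, `θ > 0`, `p ∈ (0,1]`:
`2∫_0^1 ((1+θr^{2/δ})/(1+(1-p)θr^{2/δ}) - 1) r^{-3} dr = pθδ ∫_0^1 t^{-δ}/(1+(1-p)θt) dt`.
Moreover, if `θ < 1/δ - 1` then `pθδ ∫_0^1 t^{-δ}/(1+(1-p)θt) dt < 1`, so the mean local
delay of a Poisson cellular network with base-station activity probability `p` is finite;
i.e., the critical activity probability `p_c(θ)` equals `1` whenever `θ < 1/δ - 1`. -/
theorem cellular_local_delay_activity (δ θ p : ℝ) (hδ : δ ∈ Set.Ioo (0:ℝ) 1)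
    (hθ : 0 < θ) (hp : p ∈ Set.Ioc (0:ℝ) 1) :
    2 * ∫ r in Set.Ioo (0:ℝ) 1,
        ((1 + θ * r ^ (2 / δ)) / (1 + (1 - p) * θ * r ^ (2 / δ)) - 1) * r ^ (-3 : ℝ) =
      p * θ * δ * ∫ t in Set.Ioo (0:ℝ) 1, t ^ (-δ) / (1 + (1 - p) * θ * t) ∧
    (θ < 1 / δ - 1 →
      p * θ * δ * ∫ t in Set.Ioo (0:ℝ) 1, t ^ (-δ) / (1 + (1 - p) * θ * t) < 1) := by
  obtain ⟨hδ0, hδ1⟩ := hδ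
  obtain ⟨hp0, hp1⟩ := hp
  have hδne : δ ≠ 0 := hδ0.ne'
  have hc0 : 0 ≤ (1 - p) * θ := mul_nonneg (by linarith) hθ.le
  have hb0 : 0 < 2 / δ := by positivity
  set K : ℝ := ∫ r in Ioo (0:ℝ) 1, r ^ (2 / δ - 3) / (1 + (1 - p) * θ * r ^ (2 / δ)) with hK
  -- left integral equals (pθ)·K
  have hL : (∫ r in Ioo (0:ℝ) 1,
      ((1 + θ * r ^ (2 / δ)) / (1 + (1 - p) * θ * r ^ (2 / δ)) - 1) * r ^ (-3 : ℝ))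
      = (p * θ) * K := by
    rw [hK, ← MeasureTheory.integral_const_mul]
    refine setIntegral_congr_fun measurableSet_Ioo fun r hr => ?_
    have hr0 : 0 < r := hr.1
    have hx0 : 0 < r ^ (2 / δ) := rpow_pos_of_pos hr0 _
    have hden : 0 < 1 + (1 - p) * θ * r ^ (2 / δ) := by nlinarith [mul_nonneg hc0 hx0.le]
    have hsplit : r ^ (2 / δ - 3) = r ^ (2 / δ) * r ^ (-3 : ℝ) := by
      rw [← rpow_add hr0]; ring_nf
    rw [hsplit]
    field_simp
    ring
  -- right integral via substitution t = r^(2/δ)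
  have himg : (fun r : ℝ => r ^ (2 / δ)) '' Ioo 0 1 = Ioo 0 1 := by
    ext t
    constructor
    · rintro ⟨r, ⟨hr0, hr1⟩, rfl⟩
      exact ⟨rpow_pos_of_pos hr0 _, rpow_lt_one hr0.le hr1 hb0⟩
    · rintro ⟨ht0, ht1⟩
      refine ⟨t ^ (δ / 2), ⟨rpow_pos_of_pos ht0 _, rpow_lt_one ht0.le ht1 (by positivity)⟩, ?_⟩
      have h1 : δ / 2 * (2 / δ) = 1 := by field_simp
      show (t ^ (δ / 2)) ^ (2 / δ) = t
      rw [← rpow_mul ht0.le, h1, rpow_one]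
  have hderiv : ∀ r ∈ Ioo (0:ℝ) 1,
      HasDerivWithinAt (fun r : ℝ => r ^ (2 / δ)) (2 / δ * r ^ (2 / δ - 1)) (Ioo 0 1) r :=
    fun r hr => (Real.hasDerivAt_rpow_const (Or.inl hr.1.ne')).hasDerivWithinAt
  have hinj : InjOn (fun r : ℝ => r ^ (2 / δ)) (Ioo 0 1) := by
    intro a ha b hb hab
    simp only at hab
    have h1 : (a ^ (2 / δ)) ^ (δ / 2) = (b ^ (2 / δ)) ^ (δ / 2) := by rw [hab]
    have h2 : 2 / δ * (δ / 2) = 1 := by field_simp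
    rwa [← rpow_mul ha.1.le, ← rpow_mul hb.1.le, h2, rpow_one, rpow_one] at h1
  have hR : (∫ t in Ioo (0:ℝ) 1, t ^ (-δ) / (1 + (1 - p) * θ * t)) = (2 / δ) * K := by
    rw [← himg, integral_image_eq_integral_abs_deriv_smul measurableSet_Ioo hderiv hinj,
      hK, ← MeasureTheory.integral_const_mul]
    refine setIntegral_congr_fun measurableSet_Ioo fun r hr => ?_
    have hr0 : 0 < r := hr.1
    have habs : |2 / δ * r ^ (2 / δ - 1)| = 2 / δ * r ^ (2 / δ - 1) :=
      abs_of_pos (by positivity)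
    have hpow : (r ^ (2 / δ)) ^ (-δ) = r ^ (-2 : ℝ) := by
      rw [← rpow_mul hr0.le]
      congr 1
      field_simp
    have hcomb : r ^ (2 / δ - 1) * r ^ (-2 : ℝ) = r ^ (2 / δ - 3) := by
      rw [← rpow_add hr0]; ring_nf
    simp only [smul_eq_mul, habs, hpow]
    rw [← hcomb]
    ring
  constructor
  · rw [hL, hR]; field_simp
  · intro hθδ
    have hθδ' : θ * δ < 1 - δ := by
      have key : 1 / δ * δ = 1 := by field_simp
      nlinarith [mul_lt_mul_of_pos_right hθδ hδ0]
    -- integrability of t ^ (-δ) on Ioo 0 1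
    have hInt1 : IntegrableOn (fun t : ℝ => t ^ (-δ)) (Ioo (0:ℝ) 1) := by
      have := intervalIntegral.intervalIntegrable_rpow' (a := 0) (b := 1)
        (r := -δ) (by linarith)
      rw [intervalIntegrable_iff_integrableOn_Ioc_of_le (by norm_num)] at this
      exact this.mono_set Ioo_subset_Ioc_self
    have hmeas : AEStronglyMeasurable (fun t : ℝ => t ^ (-δ) / (1 + (1 - p) * θ * t))
        (volume.restrict (Ioo (0:ℝ) 1)) := by
      refine ContinuousOn.aestronglyMeasurable ?_ measurableSet_Ioo
      refine ContinuousOn.div ?_ (by fun_prop) fun t ht => ?_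
      · exact fun t ht => (Real.continuousAt_rpow_const t (-δ) (Or.inl ht.1.ne')).continuousWithinAt
      · nlinarith [mul_nonneg hc0 ht.1.le]
    have hbound : ∀ t ∈ Ioo (0:ℝ) 1,
        t ^ (-δ) / (1 + (1 - p) * θ * t) ≤ t ^ (-δ) := by
      intro t ht
      have hx0 : 0 < t ^ (-δ) := rpow_pos_of_pos ht.1 _
      have hden : 1 ≤ 1 + (1 - p) * θ * t := by nlinarith [mul_nonneg hc0 ht.1.le]
      calc t ^ (-δ) / (1 + (1 - p) * θ * t) ≤ t ^ (-δ) / 1 :=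
            div_le_div_of_nonneg_left hx0.le (by linarith) hden
        _ = t ^ (-δ) := by ring
    have hnn : ∀ t ∈ Ioo (0:ℝ) 1, 0 ≤ t ^ (-δ) / (1 + (1 - p) * θ * t) := by
      intro t ht
      have hden : (0:ℝ) < 1 + (1 - p) * θ * t := by nlinarith [mul_nonneg hc0 ht.1.le]
      exact div_nonneg (rpow_pos_of_pos ht.1 _).le hden.le
    have hInt2 : IntegrableOn (fun t : ℝ => t ^ (-δ) / (1 + (1 - p) * θ * t))
        (Ioo (0:ℝ) 1) := by
      refine MeasureTheory.Integrable.mono hInt1 hmeas ?_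
      filter_upwards [ae_restrict_mem measurableSet_Ioo] with t ht
      rw [Real.norm_eq_abs, Real.norm_eq_abs, abs_of_nonneg (hnn t ht),
        abs_of_nonneg (rpow_pos_of_pos ht.1 _).le]
      exact hbound t ht
    have hIle : (∫ t in Ioo (0:ℝ) 1, t ^ (-δ) / (1 + (1 - p) * θ * t))
        ≤ ∫ t in Ioo (0:ℝ) 1, t ^ (-δ) :=
      setIntegral_mono_on hInt2 hInt1 measurableSet_Ioo hbound
    have hval : (∫ t in Ioo (0:ℝ) 1, t ^ (-δ)) = 1 / (1 - δ) := by
      rw [← integral_Ioc_eq_integral_Ioo, ← intervalIntegral.integral_of_le (by norm_num : (0:ℝ) ≤ 1),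
        integral_rpow (Or.inl (by linarith : (-1:ℝ) < -δ))]
      rw [Real.one_rpow, Real.zero_rpow (by linarith)]
      ring_nf
    have hInn : 0 ≤ ∫ t in Ioo (0:ℝ) 1, t ^ (-δ) / (1 + (1 - p) * θ * t) :=
      setIntegral_nonneg measurableSet_Ioo hnn
    have h1 : p * θ * δ * (∫ t in Ioo (0:ℝ) 1, t ^ (-δ) / (1 + (1 - p) * θ * t))
        ≤ θ * δ * (1 / (1 - δ)) := by
      calc p * θ * δ * (∫ t in Ioo (0:ℝ) 1, t ^ (-δ) / (1 + (1 - p) * θ * t))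
          ≤ 1 * θ * δ * (∫ t in Ioo (0:ℝ) 1, t ^ (-δ) / (1 + (1 - p) * θ * t)) := by
            apply mul_le_mul_of_nonneg_right _ hInn
            nlinarith
        _ ≤ 1 * θ * δ * (1 / (1 - δ)) := by
            apply mul_le_mul_of_nonneg_left _ (by positivity)
            rw [← hval]; exact hIle
        _ = θ * δ * (1 / (1 - δ)) := by ring
    have h2 : θ * δ * (1 / (1 - δ)) < 1 := by
      rw [mul_one_div, div_lt_one (by linarith)]
      linarith
    linarith
end

section
/- Let δ ∈ (0,1) and define A(θ) = θδ·∫_0^1 s^{−δ}/(1+θs) ds for θ > 0. Then lim_{θ→∞} θ^{−δ}·(1 + A(θ)) = πδ/sin(πδ) = 1/sinc δ. (Since ₂F₁(1,−δ;1−δ;−θ) = 1 + A(θ) is the reciprocal of the success probability of the typical user in a Poisson cellular network, this states that ₂F₁(1,−δ;1−δ;−θ) ∼ θ^δ/sinc δ as θ → ∞.) -/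
/-!
Substituting `u = θ s` gives `θ^{-δ} (1 + A θ) = θ^{-δ} + δ ∫_0^θ u^{-δ}/(1+u) du`, which tends to
`δ ∫_0^∞ u^{-δ}/(1+u) du`. The substitution `u = t/(1-t)` turns this integral into the Beta
integral `B(1-δ, δ) = Γ(1-δ) Γ(δ)`, which is `π / sin(πδ)` by the reflection formula.
-/

open Real MeasureTheory Filter Set

theorem integral_Ioo_rpow_neg_mul_one_sub_rpow {δ : ℝ} (hδ₀ : 0 < δ) (hδ₁ : δ < 1) :
    ∫ t in Ioo (0:ℝ) 1, t ^ (-δ) * (1 - t) ^ (δ - 1) = π / sin (π * δ) := by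
  have hB : Complex.betaIntegral (1 - δ) δ =
      ((∫ t in (0:ℝ)..1, t ^ (-δ) * (1 - t) ^ (δ - 1) : ℝ) : ℂ) := by
    rw [Complex.betaIntegral, ← intervalIntegral.integral_ofReal]
    refine intervalIntegral.integral_congr fun t ht => ?_
    rw [uIcc_of_le zero_le_one] at ht
    push_cast
    rw [Complex.ofReal_cpow ht.1, Complex.ofReal_cpow (sub_nonneg.2 ht.2)]
    push_cast
    ring_nf
  have hΓ : Complex.betaIntegral (1 - δ) δ = ((Gamma (1 - δ) * Gamma δ : ℝ) : ℂ) := by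
    rw [Complex.betaIntegral_eq_Gamma_mul_div _ _ (by simpa using hδ₁) (by simpa using hδ₀)]
    push_cast [← Complex.Gamma_ofReal]
    simp
  rw [← integral_Ioc_eq_integral_Ioo, ← intervalIntegral.integral_of_le zero_le_one,
    ← Gamma_mul_Gamma_one_sub, mul_comm]
  exact_mod_cast hB.symm.trans hΓ

theorem integral_Ioi_rpow_neg_div_one_add_eq_beta (δ : ℝ) :
    ∫ u in Ioi (0:ℝ), u ^ (-δ) / (1 + u) =
      ∫ t in Ioo (0:ℝ) 1, t ^ (-δ) * (1 - t) ^ (δ - 1) := by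
  have himg : (fun t : ℝ => t / (1 - t)) '' Ioo 0 1 = Ioi 0 := by
    ext u
    constructor
    · rintro ⟨t, ht, rfl⟩
      exact div_pos ht.1 (sub_pos.2 ht.2)
    · intro (hu : 0 < u)
      refine ⟨u / (1 + u), ⟨by positivity, (div_lt_one (by positivity)).2 (by linarith)⟩,
        ?_⟩
      field_simp
      ring
  have hderiv : ∀ t ∈ Ioo (0:ℝ) 1,
      HasDerivWithinAt (fun t : ℝ => t / (1 - t)) ((1 - t) ^ 2)⁻¹ (Ioo 0 1) t := by
    intro t ht
    have h : (1:ℝ) - t ≠ 0 := (sub_pos.2 ht.2).ne'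
    refine (((hasDerivAt_id' t).div ((hasDerivAt_id' t).const_sub 1) h).congr_deriv
      ?_).hasDerivWithinAt
    field_simp
    ring
  have hinj : InjOn (fun t : ℝ => t / (1 - t)) (Ioo 0 1) := by
    intro a ha b hb hab
    have := (sub_pos.2 ha.2).ne'
    have := (sub_pos.2 hb.2).ne'
    field_simp at hab
    linarith
  rw [← himg, integral_image_eq_integral_abs_deriv_smul measurableSet_Ioo hderiv hinj]
  refine setIntegral_congr_fun measurableSet_Ioo fun t ht => ?_
  have h : (0:ℝ) < 1 - t := sub_pos.2 ht.2
  rw [smul_eq_mul, abs_of_pos (by positivity), div_rpow ht.1.le h.le, rpow_neg h.le,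
    show (1:ℝ) + t / (1 - t) = (1 - t)⁻¹ by field_simp; ring, rpow_sub_one h.ne']
  field_simp

theorem integrableOn_Ioi_rpow_neg_div_one_add {δ : ℝ} (hδ₀ : 0 < δ) (hδ₁ : δ < 1) :
    IntegrableOn (fun u : ℝ => u ^ (-δ) / (1 + u)) (Ioi 0) := by
  have hcont : ContinuousOn (fun u : ℝ => u ^ (-δ) / (1 + u)) (Ioi 0) := fun u (hu : 0 < u) =>
    ((continuousAt_rpow_const u (-δ) (.inl hu.ne')).div (continuousAt_const.add continuousAt_id)
      (add_pos one_pos hu).ne').continuousWithinAt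
  rw [← Ioc_union_Ioi_eq_Ioi zero_le_one]
  refine IntegrableOn.union ?_ ?_
  · have hint : IntegrableOn (fun u : ℝ => u ^ (-δ)) (Ioc 0 1) := by
      rw [integrableOn_Ioc_iff_integrableOn_Ioo]
      exact (intervalIntegral.integrableOn_Ioo_rpow_iff one_pos).2 (by linarith)
    refine hint.mono' ((hcont.mono Ioc_subset_Ioi_self).aestronglyMeasurable measurableSet_Ioc) ?_
    filter_upwards [ae_restrict_mem measurableSet_Ioc] with u hu
    rw [norm_of_nonneg (div_nonneg (rpow_nonneg hu.1.le _) (by linarith [hu.1]))]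
    exact div_le_self (rpow_nonneg hu.1.le _) (by linarith [hu.1])
  · have hint : IntegrableOn (fun u : ℝ => u ^ (-δ - 1)) (Ioi 1) :=
      integrableOn_Ioi_rpow_of_lt (by linarith) one_pos
    refine hint.mono' ((hcont.mono (Ioi_subset_Ioi zero_le_one)).aestronglyMeasurable
      measurableSet_Ioi) ?_
    filter_upwards [ae_restrict_mem measurableSet_Ioi] with u (hu : 1 < u)
    have hu₀ : 0 < u := one_pos.trans hu
    rw [norm_of_nonneg (by positivity), rpow_sub_one hu₀.ne']
    exact div_le_div_of_nonneg_left (by positivity) hu₀ (by linarith)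

theorem integral_Ioi_rpow_neg_div_one_add {δ : ℝ} (hδ₀ : 0 < δ) (hδ₁ : δ < 1) :
    ∫ u in Ioi (0:ℝ), u ^ (-δ) / (1 + u) = π / sin (π * δ) := by
  rw [integral_Ioi_rpow_neg_div_one_add_eq_beta,
    integral_Ioo_rpow_neg_mul_one_sub_rpow hδ₀ hδ₁]

theorem integral_Ioo_rpow_neg_div_one_add_mul (δ : ℝ) {θ : ℝ} (hθ : 0 < θ) :
    ∫ s in Ioo (0:ℝ) 1, s ^ (-δ) / (1 + θ * s)
      = θ ^ (δ - 1) * ∫ u in (0:ℝ)..θ, u ^ (-δ) / (1 + u) := by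
  have hscale : ∀ s ∈ uIcc (0:ℝ) 1,
      s ^ (-δ) / (1 + θ * s) = θ ^ δ * ((θ * s) ^ (-δ) / (1 + θ * s)) := by
    intro s hs
    rw [uIcc_of_le zero_le_one] at hs
    rw [mul_rpow hθ.le hs.1, rpow_neg hθ.le, ← mul_div_assoc, ← mul_assoc,
      mul_inv_cancel₀ (rpow_pos_of_pos hθ δ).ne', one_mul]
  rw [← integral_Ioc_eq_integral_Ioo, ← intervalIntegral.integral_of_le zero_le_one,
    intervalIntegral.integral_congr hscale, intervalIntegral.integral_const_mul,
    intervalIntegral.integral_comp_mul_left (fun u => u ^ (-δ) / (1 + u)) hθ.ne',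
    mul_zero, mul_one, smul_eq_mul, ← mul_assoc, rpow_sub_one hθ.ne', div_eq_mul_inv]

/-- For `δ ∈ (0,1)`, with `A(θ) = θδ ∫_0^1 s^{-δ}/(1+θs) ds`, one has
`lim_{θ→∞} θ^{-δ}(1 + A(θ)) = πδ/sin(πδ) = 1/sinc δ`; i.e.
`₂F₁(1,-δ;1-δ;-θ) = 1 + A(θ) ∼ θ^δ/sinc δ` as `θ → ∞`. -/
theorem cellular_hypergeometric_asymptotics (δ : ℝ) (hδ : δ ∈ Set.Ioo (0:ℝ) 1)
    (A : ℝ → ℝ)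
    (hA : ∀ θ : ℝ, A θ = θ * δ * ∫ s in Set.Ioo (0:ℝ) 1, s ^ (-δ) / (1 + θ * s)) :
    Tendsto (fun θ : ℝ => θ ^ (-δ) * (1 + A θ)) atTop
      (nhds (π * δ / Real.sin (π * δ))) := by
  obtain ⟨hδ₀, hδ₁⟩ := hδ
  set J : ℝ → ℝ := fun θ => ∫ u in (0:ℝ)..θ, u ^ (-δ) / (1 + u)
  have hJ : Tendsto J atTop (nhds (π / sin (π * δ))) := by
    rw [← integral_Ioi_rpow_neg_div_one_add hδ₀ hδ₁]
    exact intervalIntegral_tendsto_integral_Ioi 0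
      (integrableOn_Ioi_rpow_neg_div_one_add hδ₀ hδ₁) tendsto_id
  have hlim : Tendsto (fun θ : ℝ => θ ^ (-δ) + δ * J θ) atTop
      (nhds (0 + δ * (π / sin (π * δ)))) :=
    (tendsto_rpow_neg_atTop hδ₀).add (hJ.const_mul δ)
  rw [zero_add, mul_div_assoc', mul_comm δ π] at hlim
  refine hlim.congr' ?_
  filter_upwards [eventually_gt_atTop 0] with θ hθ
  have hpow : θ ^ (-δ) * θ ^ δ = 1 := by rw [← rpow_add hθ, neg_add_cancel, rpow_zero]
  rw [hA, integral_Ioo_rpow_neg_div_one_add_mul δ hθ, rpow_sub_one hθ.ne']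
  field_simp
  linear_combination (-(δ * J θ)) * hpow
end

section
/- Let δ ∈ (0,1) and define B(θ) = θ²δ·∫_0^1 s^{1−δ}/(1+θs)² ds for θ > 0. Then lim_{θ→∞} θ^{−δ}·B(θ) = δ·Γ(2−δ)·Γ(δ) = πδ(1−δ)/sin(πδ); in particular B(θ) = Θ(θ^δ) as θ → ∞. (B(θ) equals θ²·(δ/(2−δ))·₂F₁(2,2−δ;3−δ;−θ), the quantity appearing in the second moment of the conditional success probability of a Poisson cellular network with random base-station activity.) -/
/-!
The substitution `u = θ s` turns `θ^(-δ) B(θ)` into `δ ∫_0^θ u^(1-δ)/(1+u)^2 du`, which tends to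
`δ ∫_0^∞ u^(1-δ)/(1+u)^2 du`. The substitution `u = t/(1-t)` identifies this integral with the
Beta integral `B(2-δ, δ) = Γ(2-δ) Γ(δ) / Γ(2)`, and `Γ(2-δ) = (1-δ) Γ(1-δ)` together with the
reflection formula gives the closed form.
-/

open Real MeasureTheory Filter Set

theorem ofReal_rpow_mul_one_sub_rpow {t : ℝ} (ht₀ : 0 ≤ t) (ht₁ : t ≤ 1) (a b : ℝ) :
    ((t ^ (a - 1) * (1 - t) ^ (b - 1) : ℝ) : ℂ) =
      (t : ℂ) ^ ((a : ℂ) - 1) * (1 - (t : ℂ)) ^ ((b : ℂ) - 1) := by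
  rw [Complex.ofReal_mul, Complex.ofReal_cpow ht₀, Complex.ofReal_cpow (sub_nonneg.2 ht₁)]
  push_cast
  rfl

theorem integrableOn_Ioo_rpow_mul_one_sub_rpow {a b : ℝ} (ha : 0 < a) (hb : 0 < b) :
    IntegrableOn (fun t : ℝ => t ^ (a - 1) * (1 - t) ^ (b - 1)) (Ioo 0 1) := by
  have hconv := Complex.betaIntegral_convergent (u := a) (v := b) (by simpa) (by simpa)
  rw [intervalIntegrable_iff_integrableOn_Ioo_of_le zero_le_one] at hconv
  refine IntegrableOn.congr_fun hconv.re (fun t ht => ?_) measurableSet_Ioo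
  rw [← ofReal_rpow_mul_one_sub_rpow ht.1.le ht.2.le, RCLike.re_to_complex, Complex.ofReal_re]

theorem integral_Ioo_rpow_mul_one_sub_rpow {a b : ℝ} (ha : 0 < a) (hb : 0 < b) :
    ∫ t in Ioo (0 : ℝ) 1, t ^ (a - 1) * (1 - t) ^ (b - 1) =
      Gamma a * Gamma b / Gamma (a + b) := by
  have hbeta := Complex.betaIntegral_eq_Gamma_mul_div a b (by simpa) (by simpa)
  rw [Complex.betaIntegral, intervalIntegral.integral_of_le zero_le_one,
    integral_Ioc_eq_integral_Ioo, ← setIntegral_congr_fun measurableSet_Ioo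
      fun t ht => ofReal_rpow_mul_one_sub_rpow ht.1.le ht.2.le a b,
    integral_complex_ofReal, ← Complex.ofReal_add, Complex.Gamma_ofReal, Complex.Gamma_ofReal,
    Complex.Gamma_ofReal] at hbeta
  exact_mod_cast hbeta

theorem hasDerivAt_div_one_sub {t : ℝ} (ht : t ≠ 1) :
    HasDerivAt (fun t : ℝ => t / (1 - t)) ((1 - t) ^ 2)⁻¹ t := by
  have h1t : 1 - t ≠ 0 := sub_ne_zero.2 (Ne.symm ht)
  have h : HasDerivAt (fun x : ℝ => x / (1 - x)) ((1 * (1 - t) - t * -1) / (1 - t) ^ 2) t :=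
    (hasDerivAt_id' t).div ((hasDerivAt_id' t).const_sub 1) h1t
  convert h using 1
  field_simp
  ring

theorem injOn_div_one_sub : InjOn (fun t : ℝ => t / (1 - t)) (Iio 1) := by
  intro x hx y hy hxy
  have hx' : 1 - x ≠ 0 := by linarith [mem_Iio.1 hx]
  have hy' : 1 - y ≠ 0 := by linarith [mem_Iio.1 hy]
  field_simp at hxy
  linarith

theorem image_div_one_sub_Ioo : (fun t : ℝ => t / (1 - t)) '' Ioo 0 1 = Ioi 0 := by
  ext u
  constructor
  · rintro ⟨t, ht, rfl⟩
    exact div_pos ht.1 (by linarith [ht.2])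
  · intro (hu : 0 < u)
    refine ⟨u / (1 + u), ⟨by positivity, (div_lt_one (by positivity)).2 (by linarith)⟩, ?_⟩
    field_simp
    ring

theorem abs_inv_sq_one_sub_mul_rpow_div_one_add_rpow {t : ℝ} (ht : t ∈ Ioo 0 1) (a b : ℝ) :
    |((1 - t) ^ 2)⁻¹| * ((t / (1 - t)) ^ (a - 1) / (1 + t / (1 - t)) ^ (a + b)) =
      t ^ (a - 1) * (1 - t) ^ (b - 1) := by
  have hs : 0 < 1 - t := by linarith [ht.2]
  have hone_add : 1 + t / (1 - t) = (1 - t)⁻¹ := by field_simp; ring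
  have hsplit : (1 - t) ^ (a + b) = (1 - t) ^ (b - 1) * (1 - t) ^ (a - 1) * (1 - t) ^ 2 := by
    rw [← rpow_natCast, ← rpow_add hs, ← rpow_add hs]
    push_cast
    ring_nf
  rw [hone_add, div_rpow ht.1.le hs.le, inv_rpow hs.le, hsplit, abs_of_pos (by positivity)]
  have : 0 < (1 - t) ^ (a - 1) := by positivity
  field_simp

theorem integrableOn_Ioi_rpow_div_one_add_rpow_iff (a b : ℝ) :
    IntegrableOn (fun u : ℝ => u ^ (a - 1) / (1 + u) ^ (a + b)) (Ioi 0) ↔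
      IntegrableOn (fun t : ℝ => t ^ (a - 1) * (1 - t) ^ (b - 1)) (Ioo 0 1) := by
  rw [← image_div_one_sub_Ioo, integrableOn_image_iff_integrableOn_abs_deriv_smul
    measurableSet_Ioo (fun t ht => (hasDerivAt_div_one_sub ht.2.ne).hasDerivWithinAt)
    (injOn_div_one_sub.mono fun t ht => ht.2)]
  exact integrableOn_congr_fun
    (fun t ht => abs_inv_sq_one_sub_mul_rpow_div_one_add_rpow ht a b) measurableSet_Ioo

theorem integral_Ioi_rpow_div_one_add_rpow (a b : ℝ) :
    ∫ u in Ioi (0 : ℝ), u ^ (a - 1) / (1 + u) ^ (a + b) =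
      ∫ t in Ioo (0 : ℝ) 1, t ^ (a - 1) * (1 - t) ^ (b - 1) := by
  rw [← image_div_one_sub_Ioo, integral_image_eq_integral_abs_deriv_smul
    measurableSet_Ioo (fun t ht => (hasDerivAt_div_one_sub ht.2.ne).hasDerivWithinAt)
    (injOn_div_one_sub.mono fun t ht => ht.2)]
  exact setIntegral_congr_fun measurableSet_Ioo
    fun t ht => abs_inv_sq_one_sub_mul_rpow_div_one_add_rpow ht a b

theorem integrableOn_Ioi_rpow_div_one_add_sq {δ : ℝ} (h0 : 0 < δ) (h2 : δ < 2) :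
    IntegrableOn (fun u : ℝ => u ^ (1 - δ) / (1 + u) ^ 2) (Ioi 0) := by
  have h := (integrableOn_Ioi_rpow_div_one_add_rpow_iff (2 - δ) δ).2
    (integrableOn_Ioo_rpow_mul_one_sub_rpow (by linarith) h0)
  simpa only [show 2 - δ - 1 = 1 - δ by ring, sub_add_cancel, rpow_two] using h

theorem integral_Ioi_rpow_div_one_add_sq {δ : ℝ} (h0 : 0 < δ) (h2 : δ < 2) :
    ∫ u in Ioi (0 : ℝ), u ^ (1 - δ) / (1 + u) ^ 2 = Gamma (2 - δ) * Gamma δ := by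
  have h := integral_Ioi_rpow_div_one_add_rpow (2 - δ) δ
  rw [integral_Ioo_rpow_mul_one_sub_rpow (by linarith) h0, sub_add_cancel, Gamma_two,
    div_one] at h
  simpa only [show 2 - δ - 1 = 1 - δ by ring, rpow_two] using h

theorem Gamma_two_sub_mul_Gamma {s : ℝ} (hs : s ≠ 1) :
    Gamma (2 - s) * Gamma s = π * (1 - s) / sin (π * s) := by
  rw [show 2 - s = (1 - s) + 1 by ring, Gamma_add_one (sub_ne_zero.2 hs.symm), mul_assoc,
    mul_comm (Gamma (1 - s)), Gamma_mul_Gamma_one_sub]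
  ring

theorem rpow_add_one_mul_setIntegral_Ioo_rpow_div_comp_mul {θ : ℝ} (hθ : 0 < θ) (c : ℝ)
    (h : ℝ → ℝ) :
    θ ^ (c + 1) * ∫ s in Ioo (0 : ℝ) 1, s ^ c / h (θ * s) = ∫ u in (0 : ℝ)..θ, u ^ c / h u := by
  have hscale := intervalIntegral.integral_comp_mul_left (fun u => u ^ c / h u) hθ.ne'
    (a := 0) (b := 1)
  rw [mul_zero, mul_one, eq_inv_smul_iff₀ hθ.ne', smul_eq_mul] at hscale
  rw [← hscale, intervalIntegral.integral_of_le zero_le_one, integral_Ioc_eq_integral_Ioo,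
    ← integral_const_mul, ← integral_const_mul]
  refine setIntegral_congr_fun measurableSet_Ioo fun s hs => ?_
  rw [mul_rpow hθ.le hs.1.le, rpow_add_one hθ.ne']
  ring

/-- For `δ ∈ (0,1)`, with `B(θ) = θ²δ ∫_0^1 s^{1-δ}/(1+θs)² ds`, one has
`lim_{θ→∞} θ^{-δ} B(θ) = δ Γ(2-δ) Γ(δ) = πδ(1-δ)/sin(πδ)`; in particular
`B(θ) = Θ(θ^δ)` as `θ → ∞`. -/
theorem cellular_second_moment_asymptotics (δ : ℝ) (hδ : δ ∈ Set.Ioo (0:ℝ) 1)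
    (B : ℝ → ℝ)
    (hB : ∀ θ : ℝ, B θ = θ ^ 2 * δ * ∫ s in Set.Ioo (0:ℝ) 1, s ^ (1 - δ) / (1 + θ * s) ^ 2) :
    Tendsto (fun θ : ℝ => θ ^ (-δ) * B θ) atTop
      (nhds (δ * Real.Gamma (2 - δ) * Real.Gamma δ)) ∧
    δ * Real.Gamma (2 - δ) * Real.Gamma δ = π * δ * (1 - δ) / Real.sin (π * δ) := by
  obtain ⟨h0, h1⟩ := hδ
  have hlim := (intervalIntegral_tendsto_integral_Ioi 0
    (integrableOn_Ioi_rpow_div_one_add_sq h0 (by linarith)) tendsto_id).const_mul δ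
  rw [integral_Ioi_rpow_div_one_add_sq h0 (by linarith), ← mul_assoc] at hlim
  refine ⟨hlim.congr' ?_, by rw [mul_assoc, Gamma_two_sub_mul_Gamma h1.ne]; ring⟩
  filter_upwards [eventually_gt_atTop 0] with θ hθ
  have hscale := rpow_add_one_mul_setIntegral_Ioo_rpow_div_comp_mul hθ (1 - δ)
    fun u => (1 + u) ^ 2
  rw [id, hB, ← hscale, show 1 - δ + 1 = -δ + 2 by ring, rpow_add hθ, rpow_two]
  ring
end
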